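/- Let f(x,y,u) = y(y−1)/(x−y) and h(x,y,u) = (2xy − x − y)/(x−y)^2 be the data of the Gibbons–Tsarev system (33). Then the extension ∂_i v = g(p_i, u, v) ∂_i u with g(p,u,v) = 1/(p−1)^2 − v/(p−1) is compatible with this system: the expression E(x,y) = g_1(x,u,v)·f(y,x,u) + g_2(x,u,v) + g_3(x,u,v)·g(y,u,v) + g(x,u,v)·h(x,y,u) satisfies E(x,y) = E(y,x) for all distinct x, y different from 1 and all u, v. -/

import Mathlib

/-!
With `g` explicit, its partial derivatives are elementary. Substituting them, `E(x,y)` becomes a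
rational function of `v` and of the symmetric functions `s = (x-1) + (y-1)`, `q = (x-1)(y-1)`
of the shifted momenta alone, so it is symmetric in `x` and `y`.
-/

/-- Partial derivative of `g(p,u,v)` in its first argument. -/
noncomputable def e1 (g : ℝ → ℝ → ℝ → ℝ) (p u v : ℝ) : ℝ := deriv (fun s => g s u v) p
/-- Partial derivative of `g(p,u,v)` in its second argument. -/
noncomputable def e2 (g : ℝ → ℝ → ℝ → ℝ) (p u v : ℝ) : ℝ := deriv (fun s => g p s v) u
/-- Partial derivative of `g(p,u,v)` in its third argument. -/
noncomputable def e3 (g : ℝ → ℝ → ℝ → ℝ) (p u v : ℝ) : ℝ := deriv (fun s => g p u s) v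

/-- The compatibility expression `E(x,y)` for an extension `∂ᵢv = g(pᵢ,u,v) ∂ᵢu` of a
one-field Gibbons–Tsarev system with data `f`, `h`. -/
noncomputable def extE (f h g : ℝ → ℝ → ℝ → ℝ) (x y u v : ℝ) : ℝ :=
  e1 g x u v * f y x u + e2 g x u v + e3 g x u v * g y u v + g x u v * h x y u

section PartialDerivatives

variable {g : ℝ → ℝ → ℝ → ℝ}

lemma e1_eq (hg : ∀ p u v : ℝ, g p u v = 1 / (p - 1) ^ 2 - v / (p - 1))
    {p : ℝ} (hp : p ≠ 1) (u v : ℝ) :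
    e1 g p u v = -2 / (p - 1) ^ 3 + v / (p - 1) ^ 2 := by
  have hp' : p - 1 ≠ 0 := sub_ne_zero.mpr hp
  have hs : HasDerivAt (fun s : ℝ => s - 1) 1 p := (hasDerivAt_id' p).sub_const 1
  have hd := ((hs.fun_pow 2).fun_inv (pow_ne_zero 2 hp')).fun_sub ((hs.fun_inv hp').const_mul v)
  simp only [e1, hg, one_div, div_eq_mul_inv v]
  rw [hd.deriv]
  field_simp
  ring

lemma e2_eq_zero (hg : ∀ p u v : ℝ, g p u v = 1 / (p - 1) ^ 2 - v / (p - 1)) (p u v : ℝ) :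
    e2 g p u v = 0 := by
  simp only [e2, hg, deriv_const]

lemma e3_eq (hg : ∀ p u v : ℝ, g p u v = 1 / (p - 1) ^ 2 - v / (p - 1)) (p u v : ℝ) :
    e3 g p u v = -1 / (p - 1) := by
  have hd := (hasDerivAt_id' v).div_const (p - 1) |>.const_sub (1 / (p - 1) ^ 2)
  simp only [e3, hg]
  rw [hd.deriv, neg_div]

end PartialDerivatives

noncomputable def symmetricForm (s q v : ℝ) : ℝ :=
  (2 * q ^ 2 + 5 * q * s - s ^ 3 + v * q * (s ^ 2 - 6 * q - q * s)) / (q ^ 2 * (s ^ 2 - 4 * q))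

lemma extE_eq_symmetricForm {f h g : ℝ → ℝ → ℝ → ℝ}
    (hf : ∀ x y u : ℝ, f x y u = y * (y - 1) / (x - y))
    (hh : ∀ x y u : ℝ, h x y u = (2 * x * y - x - y) / (x - y) ^ 2)
    (hg : ∀ p u v : ℝ, g p u v = 1 / (p - 1) ^ 2 - v / (p - 1))
    {x y : ℝ} (hxy : x ≠ y) (hx : x ≠ 1) (hy : y ≠ 1) (u v : ℝ) :
    extE f h g x y u v = symmetricForm (x + y - 2) ((x - 1) * (y - 1)) v := by
  have hx' : x - 1 ≠ 0 := sub_ne_zero.mpr hx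
  have hy' : y - 1 ≠ 0 := sub_ne_zero.mpr hy
  have hxy' : x - y ≠ 0 := sub_ne_zero.mpr hxy
  have hyx' : y - x ≠ 0 := sub_ne_zero.mpr hxy.symm
  have hdisc : (x + y - 2) ^ 2 - 4 * ((x - 1) * (y - 1)) = (x - y) ^ 2 := by ring
  rw [extE, e1_eq hg hx, e2_eq_zero hg, e3_eq hg, hf, hh, hg, hg, symmetricForm, hdisc]
  field_simp
  ring

/-- for the Gibbons–Tsarev system (33) with `f(x,y,u) = y(y−1)/(x−y)`,
`h(x,y,u) = (2xy−x−y)/(x−y)²`, the extension `g(p,u,v) = 1/(p−1)² − v/(p−1)` is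
compatible: `E(x,y) = E(y,x)` for distinct `x, y` different from `1` and all `u, v`. -/
theorem stmt_5 (f h g : ℝ → ℝ → ℝ → ℝ)
    (hf : ∀ x y u : ℝ, f x y u = y * (y - 1) / (x - y))
    (hh : ∀ x y u : ℝ, h x y u = (2 * x * y - x - y) / (x - y) ^ 2)
    (hg : ∀ p u v : ℝ, g p u v = 1 / (p - 1) ^ 2 - v / (p - 1)) :
    ∀ (x y u v : ℝ), x ≠ y → x ≠ 1 → y ≠ 1 →
      extE f h g x y u v = extE f h g y x u v := by
  intro x y u v hxy hx hy
  rw [extE_eq_symmetricForm hf hh hg hxy hx hy, extE_eq_symmetricForm hf hh hg hxy.symm hy hx,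
    add_comm y x, mul_comm (y - 1)]
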